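/- arXiv:math/0612400 — 3 statements merged into one kernel-verified Lean document; each statement's English description precedes it below -/
import Mathlib

section
/- An (n+1)×(n+1) complex matrix A = (a_{i,j})_{i,j=0}^n is Toeplitz (i.e., a_{i,j} depends only on i−j) if and only if both A and its upper-left n×n submatrix Â = (a_{i,j})_{i,j=0}^{n-1} are centro-transpose symmetric. -/
open Matrix
/-- The exchange matrix: ones on the antidiagonal, zeros elsewhere. -/
noncomputable def exchMat (N : ℕ) : Matrix (Fin N) (Fin N) ℂ :=
  Matrix.of fun i j => if (i : ℕ) + (j : ℕ) = N - 1 then 1 else 0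

private lemma exch_apply {N : ℕ} (i j : Fin N) :
    exchMat N i j = if j = i.rev then 1 else 0 := by
  have hi := i.isLt; have hj := j.isLt
  simp only [exchMat, of_apply, Fin.ext_iff, Fin.val_rev]
  by_cases h : (i : ℕ) + (j : ℕ) = N - 1
  · rw [if_pos h, if_pos (by omega)]
  · rw [if_neg h, if_neg (by omega)]

private lemma exch_apply' {N : ℕ} (i j : Fin N) :
    exchMat N i j = if i = j.rev then 1 else 0 := by
  have hi := i.isLt; have hj := j.isLt
  simp only [exchMat, of_apply, Fin.ext_iff, Fin.val_rev]
  by_cases h : (i : ℕ) + (j : ℕ) = N - 1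
  · rw [if_pos h, if_pos (by omega)]
  · rw [if_neg h, if_neg (by omega)]

private lemma Jmul {N : ℕ} (A : Matrix (Fin N) (Fin N) ℂ) (i j : Fin N) :
    (exchMat N * A) i j = A i.rev j := by
  rw [mul_apply]
  simp only [exch_apply, ite_mul, one_mul, zero_mul]
  rw [Finset.sum_eq_single i.rev]
  · simp
  · intro b _ hb; rw [if_neg hb]
  · intro h; exact absurd (Finset.mem_univ _) h

private lemma mulJ {N : ℕ} (A : Matrix (Fin N) (Fin N) ℂ) (i j : Fin N) :
    (A * exchMat N) i j = A i j.rev := by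
  rw [mul_apply]
  simp only [exch_apply', mul_ite, mul_one, mul_zero]
  rw [Finset.sum_eq_single j.rev]
  · simp
  · intro b _ hb; rw [if_neg hb]
  · intro h; exact absurd (Finset.mem_univ _) h

private lemma JAJ {N : ℕ} (A : Matrix (Fin N) (Fin N) ℂ) (i j : Fin N) :
    (exchMat N * A * exchMat N) i j = A i.rev j.rev := by
  rw [Matrix.mul_assoc, Jmul, mulJ]

set_option maxHeartbeats 1000000 in
theorem stmt_0 (n : ℕ) (A : Matrix (Fin (n + 1)) (Fin (n + 1)) ℂ) :
    (∀ i j i' j' : Fin (n + 1), (i : ℤ) - (j : ℤ) = (i' : ℤ) - (j' : ℤ) → A i j = A i' j') ↔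
      (exchMat (n + 1) * A * exchMat (n + 1) = Aᵀ ∧
        exchMat n * A.submatrix Fin.castSucc Fin.castSucc * exchMat n =
          (A.submatrix Fin.castSucc Fin.castSucc)ᵀ) := by
  constructor
  · intro h
    constructor
    · ext i j
      rw [JAJ, transpose_apply]
      apply h
      have hi := i.isLt; have hj := j.isLt
      simp only [Fin.val_rev]
      push_cast
      omega
    · ext i j
      rw [JAJ, transpose_apply]
      simp only [submatrix_apply]
      apply h
      have hi := i.isLt; have hj := j.isLt
      simp only [Fin.val_rev, Fin.coe_castSucc]
      omega
  · rintro ⟨h1, h2⟩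
    have h1' : ∀ i j : Fin (n + 1), A i.rev j.rev = A j i := by
      intro i j
      rw [← JAJ A i j, h1, transpose_apply]
    have h2' : ∀ i j : Fin n,
        A i.rev.castSucc j.rev.castSucc = A j.castSucc i.castSucc := by
      intro i j
      have e := congrFun (congrFun h2 i) j
      rw [JAJ, transpose_apply] at e
      simpa using e
    have keylem : ∀ p : Fin n, (Fin.castSucc p.rev).rev = p.succ := by
      intro p
      have hp := p.isLt
      apply Fin.ext
      simp only [Fin.val_rev, Fin.coe_castSucc, Fin.val_succ]
      omega
    have shiftF : ∀ p q : Fin n, A p.succ q.succ = A p.castSucc q.castSucc := by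
      intro p q
      have e1 := h1' (Fin.castSucc p.rev) (Fin.castSucc q.rev)
      rw [keylem, keylem] at e1
      have e2 := h2' p.rev q.rev
      rw [Fin.rev_rev, Fin.rev_rev] at e2
      exact e1.trans e2.symm
    have shift : ∀ p q : ℕ, (hp : p < n) → (hq : q < n) →
        A ⟨p + 1, by omega⟩ ⟨q + 1, by omega⟩ = A ⟨p, by omega⟩ ⟨q, by omega⟩ := by
      intro p q hp hq
      have e := shiftF ⟨p, hp⟩ ⟨q, hq⟩
      have c1 : Fin.succ (⟨p, hp⟩ : Fin n) = ⟨p + 1, by omega⟩ := rfl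
      have c2 : Fin.succ (⟨q, hq⟩ : Fin n) = ⟨q + 1, by omega⟩ := rfl
      have c3 : Fin.castSucc (⟨p, hp⟩ : Fin n) = ⟨p, by omega⟩ := rfl
      have c4 : Fin.castSucc (⟨q, hq⟩ : Fin n) = ⟨q, by omega⟩ := rfl
      rw [c1, c2, c3, c4] at e
      exact e
    have step : ∀ k p q : ℕ, (hp : p + k ≤ n) → (hq : q + k ≤ n) →
        A ⟨p + k, by omega⟩ ⟨q + k, by omega⟩ = A ⟨p, by omega⟩ ⟨q, by omega⟩ := by
      intro k
      induction k with
      | zero => intro p q hp hq; rfl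
      | succ m ih =>
        intro p q hp hq
        have e := shift (p + m) (q + m) (by omega) (by omega)
        have e' := ih p q (by omega) (by omega)
        calc A ⟨p + (m + 1), by omega⟩ ⟨q + (m + 1), by omega⟩
            = A ⟨p + m + 1, by omega⟩ ⟨q + m + 1, by omega⟩ := by
              congr 1
          _ = A ⟨p + m, by omega⟩ ⟨q + m, by omega⟩ := e
          _ = A ⟨p, by omega⟩ ⟨q, by omega⟩ := e'
    intro i j i' j' hd
    have hi := i.isLt; have hj := j.isLt; have hi' := i'.isLt; have hj' := j'.isLt
    set m := min (i : ℕ) (j : ℕ) with hm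
    set m' := min (i' : ℕ) (j' : ℕ) with hm'
    have e1 := step m ((i : ℕ) - m) ((j : ℕ) - m) (by omega) (by omega)
    have e2 := step m' ((i' : ℕ) - m') ((j' : ℕ) - m') (by omega) (by omega)
    have ei : (⟨(i : ℕ) - m + m, by omega⟩ : Fin (n + 1)) = i := Fin.ext (by simp; omega)
    have ej : (⟨(j : ℕ) - m + m, by omega⟩ : Fin (n + 1)) = j := Fin.ext (by simp; omega)
    have ei' : (⟨(i' : ℕ) - m' + m', by omega⟩ : Fin (n + 1)) = i' := Fin.ext (by simp; omega)
    have ej' : (⟨(j' : ℕ) - m' + m', by omega⟩ : Fin (n + 1)) = j' := Fin.ext (by simp; omega)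
    rw [ei, ej] at e1
    rw [ei', ej'] at e2
    rw [e1, e2]
    congr 1 <;> exact Fin.ext (by simp; omega)
end

section
/- Let A be a k·m × k·m complex matrix written in k×k blocks A_{i,j} of size m×m. Then A is doubly Toeplitz (block Toeplitz with each block a Toeplitz matrix) if and only if: (1) Aᵀ = J A J, (2) A₁ᵀ = J₁ A₁ J₁, and (3) A₂ᵀ = J₁ A₂ J₁; where A₁ is obtained from A by deleting the last block row and last block column, A₂ is obtained from A by removing the last row and last column of each block A_{i,j}, and J, J₁ are the exchange (antidiagonal ones) matrices of the appropriate sizes. -/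
/-!
Doubly Toeplitz matrices are exactly those whose entries are invariant under shifting both
indices by one step, block-wise and inside the blocks. Persymmetry `Aᵀ = J A J` reflects an entry
through the anti-diagonal; composing the reflections for `A` and for the leading principal
submatrix `A₁` (resp. `A₂`) sends an entry to its shift by one block (resp. by one position inside
the blocks). Conversely each persymmetry is immediate for a doubly Toeplitz matrix, since
reflection and truncation preserve index differences.
-/

open Matrix

/-- The exchange matrix on a product index (block lexicographical ordering):
ones on the antidiagonal of the full `k*m × k*m` matrix, zeros elsewhere. -/
noncomputable def exchProd (k m : ℕ) : Matrix (Fin k × Fin m) (Fin k × Fin m) ℂ :=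
  Matrix.of fun p q =>
    if (p.1 : ℕ) + (q.1 : ℕ) = k - 1 ∧ (p.2 : ℕ) + (q.2 : ℕ) = m - 1 then 1 else 0

/-- Reversal of both coordinates; `exchProd k m` is its permutation matrix. -/
def revProd (k m : ℕ) : Equiv.Perm (Fin k × Fin m) :=
  Fin.revPerm.prodCongr Fin.revPerm

@[simp]
lemma revProd_apply {k m : ℕ} (p : Fin k × Fin m) : revProd k m p = (p.1.rev, p.2.rev) := rfl

lemma exchProd_eq_one_submatrix (k m : ℕ) :
    exchProd k m = (1 : Matrix _ _ ℂ).submatrix (revProd k m) (Equiv.refl _) := by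
  ext ⟨i, a⟩ ⟨j, b⟩
  simp only [exchProd, of_apply, submatrix_apply, one_apply, revProd_apply, Equiv.refl_apply,
    Prod.ext_iff, Fin.ext_iff, Fin.val_rev]
  congr 1
  apply propext
  omega

lemma exchProd_mul {k m : ℕ} (A : Matrix (Fin k × Fin m) (Fin k × Fin m) ℂ) :
    exchProd k m * A = A.submatrix (revProd k m) id := by
  rw [exchProd_eq_one_submatrix, one_submatrix_mul]
  rfl

lemma mul_exchProd {k m : ℕ} (A : Matrix (Fin k × Fin m) (Fin k × Fin m) ℂ) :
    A * exchProd k m = A.submatrix id (revProd k m) := by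
  rw [exchProd_eq_one_submatrix, mul_submatrix_one]
  rfl

lemma transpose_eq_exchProd_mul_mul_exchProd_iff {k m : ℕ}
    (A : Matrix (Fin k × Fin m) (Fin k × Fin m) ℂ) :
    Aᵀ = exchProd k m * A * exchProd k m ↔ ∀ p q, A q p = A (revProd k m p) (revProd k m q) := by
  rw [exchProd_mul, mul_exchProd, ← Matrix.ext_iff]
  rfl

def IsDoublyToeplitz {α : Type*} {k m : ℕ} (A : Matrix (Fin k × Fin m) (Fin k × Fin m) α) :
    Prop :=
  ∀ p q p' q' : Fin k × Fin m, (p.1 : ℤ) - (q.1 : ℤ) = (p'.1 : ℤ) - (q'.1 : ℤ) →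
    (p.2 : ℤ) - (q.2 : ℤ) = (p'.2 : ℤ) - (q'.2 : ℤ) → A p q = A p' q'

namespace IsDoublyToeplitz

variable {k m : ℕ}

lemma transpose_eq_exchProd_mul_mul_exchProd {A : Matrix (Fin k × Fin m) (Fin k × Fin m) ℂ}
    (hA : IsDoublyToeplitz A) : Aᵀ = exchProd k m * A * exchProd k m := by
  rw [transpose_eq_exchProd_mul_mul_exchProd_iff]
  intro p q
  apply hA <;> simp only [revProd_apply, Fin.val_rev] <;> omega

lemma submatrix_prodMap {α : Type*} {k' m' : ℕ} {A : Matrix (Fin k × Fin m) (Fin k × Fin m) α}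
    (hA : IsDoublyToeplitz A) {f : Fin k' → Fin k} {g : Fin m' → Fin m}
    (hf : ∀ i j, (f i : ℤ) - f j = i - j) (hg : ∀ a b, (g a : ℤ) - g b = a - b) :
    IsDoublyToeplitz (A.submatrix (Prod.map f g) (Prod.map f g)) := by
  intro p q p' q' h₁ h₂
  apply hA
  · simpa only [Prod.map_fst, hf] using h₁
  · simpa only [Prod.map_snd, hg] using h₂

end IsDoublyToeplitz

namespace Fin

variable {α : Type*} {n : ℕ} {f : Fin (n + 1) → Fin (n + 1) → α}

lemma apply_eq_apply_add_of_shift (hf : ∀ i j : Fin n, f i.castSucc j.castSucc = f i.succ j.succ)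
    (t : ℕ) (i j : Fin (n + 1)) (hi : (i : ℕ) + t < n + 1) (hj : (j : ℕ) + t < n + 1) :
    f i j = f ⟨i + t, hi⟩ ⟨j + t, hj⟩ := by
  induction t with
  | zero => rfl
  | succ t ih =>
    have hi' : (i : ℕ) + t < n := by omega
    have hj' : (j : ℕ) + t < n := by omega
    calc f i j = f (castSucc ⟨i + t, hi'⟩) (castSucc ⟨j + t, hj'⟩) := ih (by omega) (by omega)
      _ = f (succ ⟨i + t, hi'⟩) (succ ⟨j + t, hj'⟩) := hf _ _
      _ = f ⟨i + (t + 1), hi⟩ ⟨j + (t + 1), hj⟩ := by simp only [succ_mk, Nat.add_assoc]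

lemma apply_eq_of_sub_eq_of_shift (hf : ∀ i j : Fin n, f i.castSucc j.castSucc = f i.succ j.succ)
    {i j i' j' : Fin (n + 1)} (h : (i : ℤ) - j = i' - j') : f i j = f i' j' := by
  rcases le_total (i : ℕ) i' with hle | hle
  · simpa only [show (i : ℕ) + (i' - i) = i' by omega,
      show (j : ℕ) + (i' - i) = j' by omega] using
      apply_eq_apply_add_of_shift hf (i' - i) i j (by omega) (by omega)
  · simpa only [show (i' : ℕ) + (i - i') = i by omega,
      show (j' : ℕ) + (i - i') = j by omega] using
      (apply_eq_apply_add_of_shift hf (i - i') i' j' (by omega) (by omega)).symm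

end Fin

section Persymmetric

variable {k m : ℕ} {A : Matrix (Fin (k + 1) × Fin (m + 1)) (Fin (k + 1) × Fin (m + 1)) ℂ}

lemma apply_castSucc_fst_eq_apply_succ_fst
    (hA : Aᵀ = exchProd (k + 1) (m + 1) * A * exchProd (k + 1) (m + 1))
    (hA₁ : (A.submatrix (Prod.map Fin.castSucc id) (Prod.map Fin.castSucc id))ᵀ =
      exchProd k (m + 1) * A.submatrix (Prod.map Fin.castSucc id) (Prod.map Fin.castSucc id) *
        exchProd k (m + 1))
    (i j : Fin k) (a b : Fin (m + 1)) :
    A (i.castSucc, a) (j.castSucc, b) = A (i.succ, a) (j.succ, b) := by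
  rw [transpose_eq_exchProd_mul_mul_exchProd_iff] at hA hA₁
  -- reflect through `A₁`, then back through `A`, using `rev (castSucc i) = succ (rev i)`
  have hreflect := hA₁ (j, b) (i, a)
  simp only [submatrix_apply, Prod.map, id, revProd_apply] at hreflect
  rw [hreflect, hA]
  simp only [revProd_apply, Fin.rev_castSucc, Fin.rev_rev]

lemma apply_castSucc_snd_eq_apply_succ_snd
    (hA : Aᵀ = exchProd (k + 1) (m + 1) * A * exchProd (k + 1) (m + 1))
    (hA₂ : (A.submatrix (Prod.map id Fin.castSucc) (Prod.map id Fin.castSucc))ᵀ =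
      exchProd (k + 1) m * A.submatrix (Prod.map id Fin.castSucc) (Prod.map id Fin.castSucc) *
        exchProd (k + 1) m)
    (i j : Fin (k + 1)) (a b : Fin m) :
    A (i, a.castSucc) (j, b.castSucc) = A (i, a.succ) (j, b.succ) := by
  rw [transpose_eq_exchProd_mul_mul_exchProd_iff] at hA hA₂
  have hreflect := hA₂ (j, b) (i, a)
  simp only [submatrix_apply, Prod.map, id, revProd_apply] at hreflect
  rw [hreflect, hA]
  simp only [revProd_apply, Fin.rev_castSucc, Fin.rev_rev]

end Persymmetric

lemma isDoublyToeplitz_of_shift {α : Type*} {k m : ℕ}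
    {A : Matrix (Fin (k + 1) × Fin (m + 1)) (Fin (k + 1) × Fin (m + 1)) α}
    (hfst : ∀ (i j : Fin k) (a b : Fin (m + 1)),
      A (i.castSucc, a) (j.castSucc, b) = A (i.succ, a) (j.succ, b))
    (hsnd : ∀ (i j : Fin (k + 1)) (a b : Fin m),
      A (i, a.castSucc) (j, b.castSucc) = A (i, a.succ) (j, b.succ)) :
    IsDoublyToeplitz A := by
  rintro ⟨i, a⟩ ⟨j, b⟩ ⟨i', a'⟩ ⟨j', b'⟩ h₁ h₂
  calc A (i, a) (j, b) = A (i', a) (j', b) :=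
        Fin.apply_eq_of_sub_eq_of_shift (f := fun x y => A (x, a) (y, b)) (hfst · · a b) h₁
    _ = A (i', a') (j', b') :=
        Fin.apply_eq_of_sub_eq_of_shift (f := fun x y => A (i', x) (j', y)) (hsnd i' j') h₂

theorem stmt_2 (k m : ℕ)
    (A : Matrix (Fin (k + 1) × Fin (m + 1)) (Fin (k + 1) × Fin (m + 1)) ℂ) :
    -- A is doubly Toeplitz: the block `A_{i,j}` depends only on `i - j` and each block
    -- is itself Toeplitz (the entry depends only on the difference of inner indices)
    (∀ p q p' q' : Fin (k + 1) × Fin (m + 1),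
        (p.1 : ℤ) - (q.1 : ℤ) = (p'.1 : ℤ) - (q'.1 : ℤ) →
        (p.2 : ℤ) - (q.2 : ℤ) = (p'.2 : ℤ) - (q'.2 : ℤ) → A p q = A p' q') ↔
      (Aᵀ = exchProd (k + 1) (m + 1) * A * exchProd (k + 1) (m + 1) ∧
        (A.submatrix (Prod.map Fin.castSucc id) (Prod.map Fin.castSucc id))ᵀ =
          exchProd k (m + 1) * A.submatrix (Prod.map Fin.castSucc id) (Prod.map Fin.castSucc id) *
            exchProd k (m + 1) ∧
        (A.submatrix (Prod.map id Fin.castSucc) (Prod.map id Fin.castSucc))ᵀ =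
          exchProd (k + 1) m * A.submatrix (Prod.map id Fin.castSucc) (Prod.map id Fin.castSucc) *
            exchProd (k + 1) m) := by
  change IsDoublyToeplitz A ↔ _
  constructor
  · intro hA
    refine ⟨hA.transpose_eq_exchProd_mul_mul_exchProd, ?_, ?_⟩ <;>
      apply IsDoublyToeplitz.transpose_eq_exchProd_mul_mul_exchProd <;>
      exact hA.submatrix_prodMap (fun _ _ => rfl) (fun _ _ => rfl)
  · rintro ⟨hA, hA₁, hA₂⟩
    exact isDoublyToeplitz_of_shift (apply_castSucc_fst_eq_apply_succ_fst hA hA₁)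
      (apply_castSucc_snd_eq_apply_succ_snd hA hA₂)
end

section
/- Let Q(θ) be a continuous (m+1)×(m+1) Hermitian matrix-valued function on the unit circle that is positive semidefinite for all θ, and suppose for every ε > 0 there exists a matrix polynomial P_ε(z) of degree at most n with Q(θ) + εI = P_ε(e^{iθ}) P_ε(e^{iθ})†. Then there exists a matrix polynomial P(z) of degree at most n with Q(θ) = P(e^{iθ}) P(e^{iθ})† for all θ. -/
/-!
Write `A_ε(θ) = P_ε(e^{iθ})`. In the C*-norm of matrices `‖A_ε‖² = ‖A_ε A_εᴴ‖ = ‖A_1 A_1ᴴ + (ε - 1)I‖`,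
so the values `A_ε(θ)` are bounded uniformly in `θ` and `ε ≤ 1`. The coefficients of a polynomial of
degree `≤ n` are fixed linear combinations of its values at the `(n+1)`-st roots of unity (invert
their Vandermonde matrix), hence the coefficients of `P_ε` are bounded too. A subsequence of them
converges as `ε → 0`, and `Q = P Pᴴ` holds for the limit by continuity.
-/

open Matrix Filter Topology
open scoped ComplexOrder Matrix.Norms.L2Operator

theorem norm_sq_le_of_mul_star_eq_add {A : Type*} [NonUnitalNormedRing A] [StarRing A]
    [CStarRing A] {a b x : A} (h : a * star a = b * star b + x) :
    ‖a‖ ^ 2 ≤ ‖b‖ ^ 2 + ‖x‖ := by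
  rw [sq, sq, ← CStarRing.norm_self_mul_star, ← CStarRing.norm_self_mul_star, h]
  exact norm_add_le _ _

theorem norm_le_add_one_of_mul_star_eq {A : Type*} [NormedRing A] [StarRing A] [CStarRing A]
    [NormedAlgebra ℂ A] [NormOneClass A] {q a b : A} {ε : ℝ} (hε₀ : 0 ≤ ε) (hε₁ : ε ≤ 1)
    (ha : q + (ε : ℂ) • 1 = a * star a) (hb : q + ((1 : ℝ) : ℂ) • 1 = b * star b) :
    ‖a‖ ≤ ‖b‖ + 1 := by
  have h : a * star a = b * star b + ((ε : ℂ) - 1) • 1 := by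
    rw [← ha, ← hb]
    module
  have hsq := norm_sq_le_of_mul_star_eq_add h
  have hdefect : ‖((ε : ℂ) - 1) • (1 : A)‖ ≤ 1 := by
    rw [norm_smul, norm_one, mul_one, ← Complex.ofReal_one, ← Complex.ofReal_sub,
      Complex.norm_real, Real.norm_eq_abs, abs_le]
    constructor <;> linarith
  nlinarith [norm_nonneg a, norm_nonneg b]

noncomputable def circleEval {E : Type*} [AddCommMonoid E] [Module ℂ E] {N : ℕ}
    (c : Fin N → E) (θ : ℝ) : E :=
  ∑ k : Fin N, Complex.exp (θ * Complex.I) ^ (k : ℕ) • c k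

theorem norm_circleEval_le {E : Type*} [SeminormedAddCommGroup E] [NormedSpace ℂ E] {N : ℕ}
    (c : Fin N → E) (θ : ℝ) : ‖circleEval c θ‖ ≤ ∑ k, ‖c k‖ := by
  refine (norm_sum_le _ _).trans_eq (Finset.sum_congr rfl fun k _ => ?_)
  rw [norm_smul, norm_pow, Complex.norm_exp_ofReal_mul_I, one_pow, one_mul]

theorem continuous_circleEval {E : Type*} [AddCommMonoid E] [Module ℂ E] [TopologicalSpace E]
    [ContinuousAdd E] [ContinuousConstSMul ℂ E] {N : ℕ} (θ : ℝ) :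
    Continuous fun c : Fin N → E => circleEval c θ :=
  continuous_finsetSum _ fun k _ => (continuous_apply k).const_smul _

theorem eq_sum_inv_vandermonde_smul {K E : Type*} [Field K] [AddCommGroup E] [Module K E]
    {N : ℕ} {v : Fin N → K} (hv : Function.Injective v) (c : Fin N → E) (k : Fin N) :
    c k = ∑ t, (vandermonde v)⁻¹ k t • ∑ l : Fin N, v t ^ (l : ℕ) • c l := by
  have hinv : (vandermonde v)⁻¹ * vandermonde v = 1 :=
    nonsing_inv_mul _ (isUnit_iff_ne_zero.mpr (det_vandermonde_ne_zero_iff.mpr hv))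
  have hrow (l : Fin N) : ∑ t, (vandermonde v)⁻¹ k t * v t ^ (l : ℕ) = (1 : Matrix _ _ K) k l := by
    rw [← hinv, mul_apply]; rfl
  simp_rw [Finset.smul_sum, smul_smul]
  rw [Finset.sum_comm]
  simp_rw [← Finset.sum_smul, hrow, one_apply, ite_smul, one_smul, zero_smul]
  simp

theorem exists_norm_le_mul_of_forall_norm_circleEval_le (E : Type*) [NormedAddCommGroup E]
    [NormedSpace ℂ E] (n : ℕ) :
    ∃ M : ℝ, ∀ (c : Fin (n + 1) → E) (C : ℝ), (∀ θ : ℝ, ‖circleEval c θ‖ ≤ C) → ‖c‖ ≤ M * C := by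
  set ζ := Complex.exp (2 * Real.pi * Complex.I / (n + 1 : ℕ))
  have hζ : IsPrimitiveRoot ζ (n + 1) := Complex.isPrimitiveRoot_exp _ n.succ_ne_zero
  set v : Fin (n + 1) → ℂ := fun t => ζ ^ (t : ℕ)
  have hv : Function.Injective v := fun t s h => Fin.ext (hζ.pow_inj t.isLt s.isLt h)
  have hnode (t : Fin (n + 1)) :
      v t = Complex.exp (((2 * Real.pi * t / (n + 1) : ℝ) : ℂ) * Complex.I) := by
    rw [show v t = ζ ^ (t : ℕ) from rfl, ← Complex.exp_nat_mul]
    congr 1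
    push_cast
    field_simp
  set M : Fin (n + 1) → ℝ := fun k => ∑ t, ‖(vandermonde v)⁻¹ k t‖
  refine ⟨∑ k, M k, fun c C hC => ?_⟩
  have hC0 : 0 ≤ C := (norm_nonneg _).trans (hC 0)
  refine (pi_norm_le_iff_of_nonneg (by positivity)).2 fun k => ?_
  calc ‖c k‖ = ‖∑ t, (vandermonde v)⁻¹ k t • ∑ l : Fin (n + 1), v t ^ (l : ℕ) • c l‖ := by
        rw [← eq_sum_inv_vandermonde_smul hv c k]
    _ ≤ ∑ t, ‖(vandermonde v)⁻¹ k t‖ * C := by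
        refine (norm_sum_le _ _).trans (Finset.sum_le_sum fun t _ => ?_)
        rw [norm_smul, hnode]
        exact mul_le_mul_of_nonneg_left (hC _) (norm_nonneg _)
    _ = M k * C := (Finset.sum_mul _ _ _).symm
    _ ≤ (∑ k, M k) * C := by
        gcongr
        exact Finset.single_le_sum (fun k _ => by positivity) (Finset.mem_univ k)

theorem stmt_9_general (n m : ℕ) (Q : ℝ → Matrix (Fin (m + 1)) (Fin (m + 1)) ℂ)
    (happrox : ∀ ε : ℝ, 0 < ε →
      ∃ P : Fin (n + 1) → Matrix (Fin (m + 1)) (Fin (m + 1)) ℂ, ∀ θ : ℝ,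
        Q θ + (ε : ℂ) • (1 : Matrix (Fin (m + 1)) (Fin (m + 1)) ℂ) =
          (∑ k : Fin (n + 1), Complex.exp (θ * Complex.I) ^ (k : ℕ) • P k) *
            (∑ k : Fin (n + 1), Complex.exp (θ * Complex.I) ^ (k : ℕ) • P k)ᴴ) :
    ∃ P : Fin (n + 1) → Matrix (Fin (m + 1)) (Fin (m + 1)) ℂ, ∀ θ : ℝ,
      Q θ = (∑ k : Fin (n + 1), Complex.exp (θ * Complex.I) ^ (k : ℕ) • P k) *
        (∑ k : Fin (n + 1), Complex.exp (θ * Complex.I) ^ (k : ℕ) • P k)ᴴ := by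
  obtain ⟨P₁, hP₁⟩ := happrox 1 one_pos
  choose P hP using fun j : ℕ => happrox (1 / (j + 1)) Nat.one_div_pos_of_nat
  obtain ⟨M, hM⟩ :=
    exists_norm_le_mul_of_forall_norm_circleEval_le (Matrix (Fin (m + 1)) (Fin (m + 1)) ℂ) n
  have hbdd : Bornology.IsBounded (Set.range P) := by
    refine isBounded_iff_forall_norm_le.2 ⟨M * (∑ k, ‖P₁ k‖ + 1), ?_⟩
    rintro _ ⟨j, rfl⟩
    refine hM _ _ fun θ => ?_
    have hvalue : ‖circleEval (P j) θ‖ ≤ ‖circleEval P₁ θ‖ + 1 :=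
      norm_le_add_one_of_mul_star_eq (by positivity)
        ((div_le_one (by positivity)).2 (by simp)) (hP j θ) (hP₁ θ)
    linarith [norm_circleEval_le P₁ θ]
  obtain ⟨c, -, φ, hφ, hlim⟩ := tendsto_subseq_of_bounded hbdd fun j => Set.mem_range_self j
  refine ⟨c, fun θ => tendsto_nhds_unique (f := fun j => Q θ + ((1 / (φ j + 1) : ℝ) : ℂ) • 1)
    (l := atTop) ?_ ?_⟩
  · have hε : Tendsto (fun j => 1 / ((φ j : ℝ) + 1)) atTop (𝓝 0) :=
      tendsto_one_div_add_atTop_nhds_zero_nat.comp hφ.tendsto_atTop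
    simpa using tendsto_const_nhds.add
      (((Complex.continuous_ofReal.tendsto 0).comp hε).smul_const (1 : Matrix _ _ ℂ))
  · simp_rw [hP]
    exact (((continuous_circleEval θ).mul (continuous_circleEval θ).matrix_conjTranspose).tendsto
      c).comp hlim

theorem stmt_9 (n m : ℕ) (Q : ℝ → Matrix (Fin (m + 1)) (Fin (m + 1)) ℂ)
    (hcont : Continuous Q)
    (hpsd : ∀ θ : ℝ, (Q θ).PosSemidef)
    (happrox : ∀ ε : ℝ, 0 < ε →
      ∃ P : Fin (n + 1) → Matrix (Fin (m + 1)) (Fin (m + 1)) ℂ, ∀ θ : ℝ,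
        Q θ + (ε : ℂ) • (1 : Matrix (Fin (m + 1)) (Fin (m + 1)) ℂ) =
          (∑ k : Fin (n + 1), Complex.exp (θ * Complex.I) ^ (k : ℕ) • P k) *
            (∑ k : Fin (n + 1), Complex.exp (θ * Complex.I) ^ (k : ℕ) • P k)ᴴ) :
    ∃ P : Fin (n + 1) → Matrix (Fin (m + 1)) (Fin (m + 1)) ℂ, ∀ θ : ℝ,
      Q θ = (∑ k : Fin (n + 1), Complex.exp (θ * Complex.I) ^ (k : ℕ) • P k) *
        (∑ k : Fin (n + 1), Complex.exp (θ * Complex.I) ^ (k : ℕ) • P k)ᴴ :=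
  stmt_9_general n m Q happrox
end
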